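/- Let ⊗ be a continuous t-norm on [0,1], X a compact Hausdorff space, and Φ : C(X,[0,1]) → [0,1] a map satisfying (Mon), (Act), (Sup), (Top) and (Ten). If Zero(Φ) = {x₀} for some x₀ ∈ X, then Φ(ψ) = ψ(x₀) for every continuous ψ : X → [0,1]. -/

import Mathlib

/-!
Every `y ≠ x₀` carries a `Φ`-zero `θ` with `θ y > 0`, so by compactness and `(Sup)` every closed
`K ∌ x₀` carries a `Φ`-zero `θ > c > 0` on `K`. This is boosted to a `Φ`-zero equal to `1` on `K`:
take Urysohn functions `g = 1` on `K` and `h = 1` off `{θ > c}` with `g ⊗ h = 0`. Then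
`c ≤ (Φ h)ⁿ` and `Φ g ⊗ (Φ h)ⁿ⁺¹ = 0`, so the limit `e = ⨅ n, (Φ h)ⁿ` is a nonzero idempotent
annihilating `Φ g`; as `⊗` is continuous, every `s ≤ e` is a multiple of `e`, so `s ⊗ e = s`,
which forces `Φ g = 0`. Such `Φ`-zeros make `Φ ψ` depend only on `ψ` near `x₀`, and comparing `ψ`
with constants gives `Φ ψ = ψ x₀`.
-/

open unitInterval Set

/-- A continuous t-norm on the unit interval `[0,1]`. -/
structure ContinuousTNorm where
  mul : I → I → I
  comm : ∀ x y, mul x y = mul y x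
  assoc : ∀ x y z, mul (mul x y) z = mul x (mul y z)
  mono : ∀ ⦃x₁ x₂ y₁ y₂ : I⦄, x₁ ≤ x₂ → y₁ ≤ y₂ → mul x₁ y₁ ≤ mul x₂ y₂
  continuous : Continuous fun p : I × I => mul p.1 p.2
  one_mul' : ∀ x, mul 1 x = x

/-- The `n`-fold `⊗`-power `xⁿ`. -/
def ContinuousTNorm.pow (T : ContinuousTNorm) (x : I) : ℕ → I
  | 0 => 1
  | n + 1 => T.mul x (T.pow x n)


/-- The constant map `1` in `C(X,[0,1])`. -/
def oneCM {X : Type*} [TopologicalSpace X] : C(X, I) := ⟨fun _ => 1, continuous_const⟩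

/-- Pointwise tensor of continuous `[0,1]`-valued maps. -/
def tensCM {X : Type*} [TopologicalSpace X] (T : ContinuousTNorm) (ψ₁ ψ₂ : C(X, I)) :
    C(X, I) :=
  ⟨fun x => T.mul (ψ₁ x) (ψ₂ x), T.continuous.comp (ψ₁.continuous.prodMk ψ₂.continuous)⟩

/-- Pointwise action `u ⊗ ψ`. -/
def smulCM {X : Type*} [TopologicalSpace X] (T : ContinuousTNorm) (u : I) (ψ : C(X, I)) :
    C(X, I) :=
  ⟨fun x => T.mul u (ψ x), T.continuous.comp (continuous_const.prodMk ψ.continuous)⟩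

/-- Pointwise binary supremum. -/
noncomputable def supCM {X : Type*} [TopologicalSpace X] (ψ₁ ψ₂ : C(X, I)) : C(X, I) :=
  ⟨fun x => max (ψ₁ x) (ψ₂ x), ψ₁.continuous.max ψ₂.continuous⟩

namespace ContinuousTNorm

variable (T : ContinuousTNorm)

lemma mul_one (x : I) : T.mul x 1 = x := by
  rw [T.comm, T.one_mul']

lemma mul_le_right (x y : I) : T.mul x y ≤ y := by
  simpa only [T.one_mul'] using T.mono (le_one' (t := x)) le_rfl

lemma zero_mul (x : I) : T.mul 0 x = 0 :=
  le_antisymm ((T.mono le_rfl (le_one' (t := x))).trans (T.mul_one 0).le) bot_le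

lemma mul_zero (x : I) : T.mul x 0 = 0 := by
  rw [T.comm, T.zero_mul]

lemma one_pow (n : ℕ) : T.pow 1 n = 1 := by
  induction n with
  | zero => rfl
  | succ n ih => rw [pow, T.one_mul', ih]

lemma zero_pow_succ (n : ℕ) : T.pow 0 (n + 1) = 0 :=
  T.zero_mul _

lemma pow_add (t : I) (m n : ℕ) : T.pow t (m + n) = T.mul (T.pow t m) (T.pow t n) := by
  induction m with
  | zero => rw [Nat.zero_add, pow, T.one_mul']
  | succ m ih => rw [Nat.succ_add, pow, ih, pow, T.assoc]

lemma antitone_pow (t : I) : Antitone (T.pow t) :=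
  antitone_nat_of_succ_le fun n => T.mul_le_right t (T.pow t n)

lemma continuous_mul_right (a : I) : Continuous fun x => T.mul x a :=
  T.continuous.comp (continuous_id.prodMk continuous_const)

lemma exists_mul_eq_of_le {s e : I} (hse : s ≤ e) : ∃ z, T.mul z e = s :=
  intermediate_value_univ 0 1 (T.continuous_mul_right e)
    ⟨by simp only [T.zero_mul, nonneg'], by simpa only [T.one_mul'] using hse⟩

lemma eq_zero_of_mul_idempotent_eq_zero {s e : I} (he : T.mul e e = e) (he0 : e ≠ 0)
    (hse : T.mul s e = 0) : s = 0 := by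
  rcases le_total s e with hle | hle
  · obtain ⟨z, rfl⟩ := T.exists_mul_eq_of_le hle
    calc T.mul z e = T.mul z (T.mul e e) := by rw [he]
      _ = T.mul (T.mul z e) e := (T.assoc z e e).symm
      _ = 0 := hse
  · refine absurd (le_antisymm ?_ bot_le) he0
    calc e = T.mul e e := he.symm
      _ ≤ T.mul s e := T.mono hle le_rfl
      _ = 0 := hse

lemma mul_self_iInf_pow (t : I) :
    T.mul (⨅ n, T.pow t n) (⨅ n, T.pow t n) = ⨅ n, T.pow t n := by
  have hlim := tendsto_atTop_iInf (T.antitone_pow t)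
  have hsq := (T.continuous.tendsto _).comp (hlim.prodMk_nhds hlim)
  refine tendsto_nhds_unique hsq ?_
  simpa only [Function.comp_def, ← T.pow_add] using
    hlim.comp (Filter.tendsto_atTop_mono (fun n => Nat.le_add_left n n) Filter.tendsto_id)

lemma eq_zero_of_forall_mul_pow_eq_zero {s t c : I} (hc : 0 < c) (hct : ∀ n, c ≤ T.pow t n)
    (hst : ∀ n, T.mul s (T.pow t (n + 1)) = 0) : s = 0 := by
  refine T.eq_zero_of_mul_idempotent_eq_zero (T.mul_self_iInf_pow t)
    (hc.trans_le (le_iInf hct)).ne' (le_antisymm ?_ bot_le)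
  exact (T.mono le_rfl (iInf_le _ 1)).trans (hst 0).le

end ContinuousTNorm

section Urysohn

variable {X : Type*} [TopologicalSpace X] [NormalSpace X]

lemma exists_unitInterval_zero_one_of_isClosed {s t : Set X} (hs : IsClosed s)
    (ht : IsClosed t) (hst : Disjoint s t) : ∃ f : C(X, I), EqOn f 0 s ∧ EqOn f 1 t := by
  obtain ⟨f, hf0, hf1, hf⟩ := exists_continuous_zero_one_of_isClosed hs ht hst
  exact ⟨⟨fun x => ⟨f x, hf x⟩, by fun_prop⟩, fun x hx => Subtype.ext (hf0 hx),
    fun x hx => Subtype.ext (hf1 hx)⟩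

lemma exists_unitInterval_pair_of_subset {K U : Set X} (hK : IsClosed K)
    (hU : IsOpen U) (hKU : K ⊆ U) :
    ∃ g h : C(X, I), EqOn g 1 K ∧ EqOn h 1 Uᶜ ∧ ∀ x, g x = 0 ∨ h x = 0 := by
  obtain ⟨V, hV, hKV, hVU⟩ := normal_exists_closure_subset hK hU hKU
  obtain ⟨g, hg0, hg1⟩ := exists_unitInterval_zero_one_of_isClosed hV.isClosed_compl hK
    (disjoint_compl_left_iff_subset.mpr hKV)
  obtain ⟨h, hh0, hh1⟩ := exists_unitInterval_zero_one_of_isClosed isClosed_closure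
    hU.isClosed_compl (disjoint_compl_right_iff_subset.mpr hVU)
  refine ⟨g, h, hg1, hh1, fun x => ?_⟩
  by_cases hx : x ∈ V
  · exact .inr (hh0 (subset_closure hx))
  · exact .inl (hg0 hx)

end Urysohn

section TensorState

variable {X : Type*} [TopologicalSpace X] {T : ContinuousTNorm} {Φ : C(X, I) → I}

def tensPowCM (T : ContinuousTNorm) (h : C(X, I)) : ℕ → C(X, I)
  | 0 => oneCM
  | n + 1 => tensCM T h (tensPowCM T h n)

lemma tensPowCM_apply (h : C(X, I)) (n : ℕ) (x : X) : tensPowCM T h n x = T.pow (h x) n := by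
  induction n with
  | zero => rfl
  | succ n ih => simp only [tensPowCM, tensCM, ContinuousMap.coe_mk, ih, ContinuousTNorm.pow]

lemma phi_const (hAct : ∀ (u : I) (ψ : C(X, I)), Φ (smulCM T u ψ) = T.mul u (Φ ψ))
    (hTop : Φ oneCM = 1) (c : I) : Φ (ContinuousMap.const X c) = c := by
  have hc : ContinuousMap.const X c = smulCM T c oneCM :=
    ContinuousMap.ext fun _ => (T.mul_one c).symm
  rw [hc, hAct, hTop, T.mul_one]

lemma phi_tensPowCM (hTop : Φ oneCM = 1)
    (hTen : ∀ ψ₁ ψ₂ : C(X, I), Φ (tensCM T ψ₁ ψ₂) = T.mul (Φ ψ₁) (Φ ψ₂)) (h : C(X, I))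
    (n : ℕ) : Φ (tensPowCM T h n) = T.pow (Φ h) n := by
  induction n with
  | zero => exact hTop
  | succ n ih => rw [tensPowCM, hTen, ih, ContinuousTNorm.pow]

lemma phi_eq_zero_of_mul_eq_zero
    (hMon : ∀ ψ₁ ψ₂ : C(X, I), (∀ x, ψ₁ x ≤ ψ₂ x) → Φ ψ₁ ≤ Φ ψ₂)
    (hAct : ∀ (u : I) (ψ : C(X, I)), Φ (smulCM T u ψ) = T.mul u (Φ ψ))
    (hSup : ∀ ψ₁ ψ₂ : C(X, I), Φ (supCM ψ₁ ψ₂) = max (Φ ψ₁) (Φ ψ₂))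
    (hTop : Φ oneCM = 1)
    (hTen : ∀ ψ₁ ψ₂ : C(X, I), Φ (tensCM T ψ₁ ψ₂) = T.mul (Φ ψ₁) (Φ ψ₂))
    {θ g h : C(X, I)} {c : I} (hθ : Φ θ = 0) (hc : 0 < c) (hθh : ∀ x, c < θ x ∨ h x = 1)
    (hgh : ∀ x, g x = 0 ∨ h x = 0) : Φ g = 0 := by
  have hc_le : ∀ n, c ≤ T.pow (Φ h) n := by
    intro n
    have hle := hMon (ContinuousMap.const X c) (supCM (tensPowCM T h n) θ) fun x => by
      rcases hθh x with hx | hx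
      · exact le_max_of_le_right hx.le
      · exact le_max_of_le_left (by rw [tensPowCM_apply, hx, T.one_pow]; exact le_one')
    rwa [phi_const hAct hTop, hSup, phi_tensPowCM hTop hTen, hθ, max_eq_left nonneg'] at hle
  have hmul : ∀ n, T.mul (Φ g) (T.pow (Φ h) (n + 1)) = 0 := by
    intro n
    have hzero : tensCM T g (tensPowCM T h (n + 1)) = ContinuousMap.const X 0 := by
      ext1 x
      rcases hgh x with hx | hx <;>
        simp only [tensCM, ContinuousMap.coe_mk, ContinuousMap.const_apply, tensPowCM_apply, hx,
          T.zero_mul, T.zero_pow_succ, T.mul_zero]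
    rw [← phi_tensPowCM hTop hTen, ← hTen, hzero, phi_const hAct hTop]
  exact T.eq_zero_of_forall_mul_pow_eq_zero hc hc_le hmul

lemma exists_phi_eq_zero_forall_lt
    (hAct : ∀ (u : I) (ψ : C(X, I)), Φ (smulCM T u ψ) = T.mul u (Φ ψ))
    (hSup : ∀ ψ₁ ψ₂ : C(X, I), Φ (supCM ψ₁ ψ₂) = max (Φ ψ₁) (Φ ψ₂)) (hTop : Φ oneCM = 1)
    {K : Set X} (hK : IsCompact K) (hpos : ∀ y ∈ K, ∃ θ : C(X, I), Φ θ = 0 ∧ θ y ≠ 0) :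
    ∃ θ : C(X, I), Φ θ = 0 ∧ ∃ c > 0, ∀ x ∈ K, c < θ x := by
  refine hK.induction_on ?empty ?mono ?union ?nhds
  case empty => exact ⟨ContinuousMap.const X 0, phi_const hAct hTop 0, 1, zero_lt_one, by simp⟩
  case mono =>
    exact fun S S' hSS' ⟨θ, hθ, c, hc, hcθ⟩ => ⟨θ, hθ, c, hc, fun x hx => hcθ x (hSS' hx)⟩
  case union =>
    rintro S S' ⟨θ, hθ, c, hc, hcθ⟩ ⟨θ', hθ', c', hc', hcθ'⟩
    refine ⟨supCM θ θ', by rw [hSup, hθ, hθ', max_self], min c c', lt_min hc hc', ?_⟩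
    rintro x (hx | hx)
    · exact (min_le_left c c').trans_lt ((hcθ x hx).trans_le (le_max_left _ _))
    · exact (min_le_right c c').trans_lt ((hcθ' x hx).trans_le (le_max_right _ _))
  case nhds =>
    intro y hy
    obtain ⟨θ, hθ, hθy⟩ := hpos y hy
    obtain ⟨c, hc, hcθ⟩ := exists_between (unitInterval.pos_iff_ne_zero.mpr hθy)
    exact ⟨{x | c < θ x}, mem_nhdsWithin_of_mem_nhds
      ((isOpen_lt continuous_const θ.continuous).mem_nhds hcθ), θ, hθ, c, hc, fun _ hx => hx⟩

lemma exists_phi_eq_zero_eqOn_one [CompactSpace X] [NormalSpace X]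
    (hMon : ∀ ψ₁ ψ₂ : C(X, I), (∀ x, ψ₁ x ≤ ψ₂ x) → Φ ψ₁ ≤ Φ ψ₂)
    (hAct : ∀ (u : I) (ψ : C(X, I)), Φ (smulCM T u ψ) = T.mul u (Φ ψ))
    (hSup : ∀ ψ₁ ψ₂ : C(X, I), Φ (supCM ψ₁ ψ₂) = max (Φ ψ₁) (Φ ψ₂))
    (hTop : Φ oneCM = 1)
    (hTen : ∀ ψ₁ ψ₂ : C(X, I), Φ (tensCM T ψ₁ ψ₂) = T.mul (Φ ψ₁) (Φ ψ₂))
    {K : Set X} (hK : IsClosed K) (hpos : ∀ y ∈ K, ∃ θ : C(X, I), Φ θ = 0 ∧ θ y ≠ 0) :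
    ∃ g : C(X, I), Φ g = 0 ∧ EqOn g 1 K := by
  obtain ⟨θ, hθ, c, hc, hcθ⟩ := exists_phi_eq_zero_forall_lt hAct hSup hTop hK.isCompact hpos
  obtain ⟨g, h, hgK, hhU, hgh⟩ := exists_unitInterval_pair_of_subset hK
    (isOpen_lt continuous_const θ.continuous) hcθ
  refine ⟨g, phi_eq_zero_of_mul_eq_zero hMon hAct hSup hTop hTen hθ hc (fun x => ?_) hgh, hgK⟩
  exact (em (c < θ x)).imp_right fun hx => hhU hx

lemma phi_le_of_forall_notMem_le (hMon : ∀ ψ₁ ψ₂ : C(X, I), (∀ x, ψ₁ x ≤ ψ₂ x) → Φ ψ₁ ≤ Φ ψ₂)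
    (hSup : ∀ ψ₁ ψ₂ : C(X, I), Φ (supCM ψ₁ ψ₂) = max (Φ ψ₁) (Φ ψ₂)) {K : Set X} {θ : C(X, I)}
    (hθ : Φ θ = 0) (hθK : EqOn θ 1 K) {ψ₁ ψ₂ : C(X, I)} (hle : ∀ x ∉ K, ψ₁ x ≤ ψ₂ x) :
    Φ ψ₁ ≤ Φ ψ₂ := by
  have hψθ := hMon ψ₁ (supCM ψ₂ θ) fun x => by
    by_cases hx : x ∈ K
    · exact le_max_of_le_right ((hθK hx).symm ▸ le_one')
    · exact le_max_of_le_left (hle x hx)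
  rwa [hSup, hθ, max_eq_left nonneg'] at hψθ

end TensorState

/-- If `Φ : C(X,[0,1]) → [0,1]` satisfies `(Mon)`, `(Act)`, `(Sup)`, `(Top)` and `(Ten)`
and `Zero(Φ) = {x₀}`, then `Φ` is evaluation at `x₀`. -/
theorem phi_eq_eval_of_zero_singleton (T : ContinuousTNorm) {X : Type*} [TopologicalSpace X]
    [CompactSpace X] [T2Space X] (Φ : C(X, I) → I)
    (hMon : ∀ ψ₁ ψ₂ : C(X, I), (∀ x, ψ₁ x ≤ ψ₂ x) → Φ ψ₁ ≤ Φ ψ₂)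
    (hAct : ∀ (u : I) (ψ : C(X, I)), Φ (smulCM T u ψ) = T.mul u (Φ ψ))
    (hSup : ∀ ψ₁ ψ₂ : C(X, I), Φ (supCM ψ₁ ψ₂) = max (Φ ψ₁) (Φ ψ₂))
    (hTop : Φ oneCM = 1)
    (hTen : ∀ ψ₁ ψ₂ : C(X, I), Φ (tensCM T ψ₁ ψ₂) = T.mul (Φ ψ₁) (Φ ψ₂))
    (x₀ : X) (hZero : {x : X | ∀ ψ : C(X, I), Φ ψ = 0 → ψ x = 0} = {x₀}) :
    ∀ ψ : C(X, I), Φ ψ = ψ x₀ := by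
  have hpos : ∀ y ≠ x₀, ∃ θ : C(X, I), Φ θ = 0 ∧ θ y ≠ 0 := by
    intro y hy
    have hy' : y ∉ {x : X | ∀ ψ : C(X, I), Φ ψ = 0 → ψ x = 0} := hZero ▸ hy
    simpa only [mem_ofPred_eq, not_forall, exists_prop] using hy'
  have hkey (K : Set X) (hK : IsClosed K) (hx₀ : x₀ ∉ K) : ∃ θ : C(X, I), Φ θ = 0 ∧ EqOn θ 1 K :=
    exists_phi_eq_zero_eqOn_one hMon hAct hSup hTop hTen hK fun y hy =>
      hpos y (ne_of_mem_of_not_mem hy hx₀)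
  intro ψ
  have hupper (v : I) (hv : ψ x₀ < v) : Φ ψ ≤ v := by
    obtain ⟨θ, hθ, hθK⟩ := hkey {x | v ≤ ψ x} (isClosed_le continuous_const ψ.continuous) hv.not_ge
    simpa only [phi_const hAct hTop] using phi_le_of_forall_notMem_le hMon hSup hθ hθK
      (ψ₂ := ContinuousMap.const X v) fun x hx => (not_le.mp hx).le
  have hlower (v : I) (hv : v < ψ x₀) : v ≤ Φ ψ := by
    obtain ⟨θ, hθ, hθK⟩ := hkey {x | ψ x ≤ v} (isClosed_le ψ.continuous continuous_const) hv.not_ge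
    simpa only [phi_const hAct hTop] using phi_le_of_forall_notMem_le hMon hSup hθ hθK
      (ψ₁ := ContinuousMap.const X v) fun x hx => (not_le.mp hx).le
  exact le_antisymm (le_of_forall_gt_imp_ge_of_dense hupper)
    (le_of_forall_lt_imp_le_of_dense hlower)
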